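/- Suppose W, V ∈ ℝ^{M×N} are matrices such that the minimizers d(W) = argmin_d max_i (w^i)ᵀd + (1/2)‖d‖² and d(V) (defined analogously) satisfy ‖d(W)‖ ≤ C and ‖d(V)‖ ≤ C. Then ‖d(W) − d(V)‖² ≤ 2C‖W − V‖, i.e., ‖d(W) − d(V)‖ ≤ √(2C) ‖W − V‖^{1/2}. -/
import Mathlib

open scoped RealInnerProductSpace

lemma strong_min_aux {N M : ℕ} (hne : (Finset.univ : Finset (Fin M)).Nonempty)
    (w : Fin M → EuclideanSpace ℝ (Fin N)) (d₀ d : EuclideanSpace ℝ (Fin N))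
    (hmin : ∀ e : EuclideanSpace ℝ (Fin N),
      (Finset.univ.sup' hne (fun i => ⟪w i, d₀⟫)) + (1 / 2) * ‖d₀‖ ^ 2
      ≤ (Finset.univ.sup' hne (fun i => ⟪w i, e⟫)) + (1 / 2) * ‖e‖ ^ 2) :
    (Finset.univ.sup' hne (fun i => ⟪w i, d₀⟫)) + (1 / 2) * ‖d₀‖ ^ 2
      + (1 / 2) * ‖d - d₀‖ ^ 2
    ≤ (Finset.univ.sup' hne (fun i => ⟪w i, d⟫)) + (1 / 2) * ‖d‖ ^ 2 := by
  set g : EuclideanSpace ℝ (Fin N) → ℝ :=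
    fun e => Finset.univ.sup' hne (fun i => ⟪w i, e⟫) with hg
  have key : ∀ t : ℝ, 0 < t → t < 1 →
      g d₀ + (1/2) * ‖d₀‖ ^ 2 + (1/2) * (1 - t) * ‖d - d₀‖ ^ 2
        ≤ g d + (1/2) * ‖d‖ ^ 2 := by
    intro t ht ht1
    set e : EuclideanSpace ℝ (Fin N) := d₀ + t • (d - d₀) with he
    have hconv : g e ≤ (1 - t) * g d₀ + t * g d := by
      apply Finset.sup'_le
      intro i _
      have h1 : ⟪w i, e⟫ = (1 - t) * ⟪w i, d₀⟫ + t * ⟪w i, d⟫ := by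
        rw [he, inner_add_right, real_inner_smul_right, inner_sub_right]
        ring
      have h2 : ⟪w i, d₀⟫ ≤ g d₀ := by
        rw [hg]; exact Finset.le_sup' (fun i => ⟪w i, d₀⟫) (Finset.mem_univ i)
      have h3 : ⟪w i, d⟫ ≤ g d := by
        rw [hg]; exact Finset.le_sup' (fun i => ⟪w i, d⟫) (Finset.mem_univ i)
      rw [h1]
      nlinarith [ht.le, ht1.le]
    have hquad : ‖e‖ ^ 2 = (1 - t) * ‖d₀‖ ^ 2 + t * ‖d‖ ^ 2
        - t * (1 - t) * ‖d - d₀‖ ^ 2 := by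
      have e1 : ‖e‖ ^ 2 = ⟪e, e⟫ := (real_inner_self_eq_norm_sq e).symm
      have e2 : ‖d₀‖ ^ 2 = ⟪d₀, d₀⟫ := (real_inner_self_eq_norm_sq d₀).symm
      have e3 : ‖d‖ ^ 2 = ⟪d, d⟫ := (real_inner_self_eq_norm_sq d).symm
      have e4 : ‖d - d₀‖ ^ 2 = ⟪d, d⟫ - 2 * ⟪d₀, d⟫ + ⟪d₀, d₀⟫ := by
        rw [← real_inner_self_eq_norm_sq, inner_sub_left, inner_sub_right,
          inner_sub_right, real_inner_comm d d₀]
        ring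
      have e5 : ⟪e, e⟫ = ⟪d₀, d₀⟫ + 2 * t * (⟪d₀, d⟫ - ⟪d₀, d₀⟫)
          + t^2 * (⟪d, d⟫ - 2 * ⟪d₀, d⟫ + ⟪d₀, d₀⟫) := by
        rw [he, real_inner_add_add_self, real_inner_smul_right,
          real_inner_smul_left, real_inner_smul_right, inner_sub_right,
          inner_sub_left, inner_sub_right, inner_sub_right, real_inner_comm d d₀]
        ring
      rw [e1, e2, e3, e4, e5]; ring
    have hm := hmin e
    change g d₀ + (1/2) * ‖d₀‖ ^ 2 ≤ g e + (1/2) * ‖e‖ ^ 2 at hm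
    rw [hquad] at hm
    nlinarith
  by_contra hcon
  push_neg at hcon
  change g d + (1/2) * ‖d‖ ^ 2 <
    g d₀ + (1/2) * ‖d₀‖ ^ 2 + (1/2) * ‖d - d₀‖ ^ 2 at hcon
  set A : ℝ := g d + (1/2) * ‖d‖ ^ 2 - (g d₀ + (1/2) * ‖d₀‖ ^ 2) with hA
  set B : ℝ := (1/2) * ‖d - d₀‖ ^ 2 with hB
  have hAB : A < B := by rw [hA, hB]; linarith
  have hB0 : 0 < B := by
    have := key (1/2) (by norm_num) (by norm_num)
    rw [hB]; nlinarith
  set t : ℝ := min ((B - A) / B / 2) (1/2) with htdef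
  have ht0 : 0 < t :=
    lt_min (div_pos (div_pos (sub_pos.mpr hAB) hB0) two_pos) (by norm_num)
  have ht1 : t < 1 := lt_of_le_of_lt (min_le_right _ _) (by norm_num)
  have hk := key t ht0 ht1
  have hk2 : (1/2) * (1 - t) * ‖d - d₀‖ ^ 2 ≤ A := by rw [hA]; linarith
  have htB : t * ‖d - d₀‖ ^ 2 ≤ B - A := by
    have h1 : t ≤ (B - A) / B / 2 := min_le_left _ _
    have h2 : ‖d - d₀‖ ^ 2 = 2 * B := by rw [hB]; ring
    rw [h2]
    calc t * (2 * B) ≤ (B - A) / B / 2 * (2 * B) := by nlinarith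
      _ = (B - A) / B * B := by ring
      _ = B - A := div_mul_cancel₀ _ hB0.ne'
  have hsplit : (1/2) * (1 - t) * ‖d - d₀‖ ^ 2
      = B - (1/2) * (t * ‖d - d₀‖ ^ 2) := by rw [hB]; ring
  rw [hsplit] at hk2
  clear_value t A B
  linarith

/-- Hölder continuity (exponent 1/2) of the min-norm direction map W ↦ d(W). -/
theorem direction_map_holder
    {N M : ℕ} (hM : 0 < M)
    (w v : Fin M → EuclideanSpace ℝ (Fin N))
    (K C : ℝ) (hK : 0 ≤ K) (hC : 0 < C)
    (hdom : ∀ i, ∀ d : EuclideanSpace ℝ (Fin N), |⟪w i - v i, d⟫| ≤ K * ‖d‖)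
    (dW dV : EuclideanSpace ℝ (Fin N))
    (hdW : ∀ d : EuclideanSpace ℝ (Fin N),
      (Finset.univ.sup' (Finset.univ_nonempty_iff.mpr (Fin.pos_iff_nonempty.mp hM))
        (fun i => ⟪w i, dW⟫)) + (1 / 2) * ‖dW‖ ^ 2
      ≤ (Finset.univ.sup' (Finset.univ_nonempty_iff.mpr (Fin.pos_iff_nonempty.mp hM))
        (fun i => ⟪w i, d⟫)) + (1 / 2) * ‖d‖ ^ 2)
    (hdV : ∀ d : EuclideanSpace ℝ (Fin N),
      (Finset.univ.sup' (Finset.univ_nonempty_iff.mpr (Fin.pos_iff_nonempty.mp hM))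
        (fun i => ⟪v i, dV⟫)) + (1 / 2) * ‖dV‖ ^ 2
      ≤ (Finset.univ.sup' (Finset.univ_nonempty_iff.mpr (Fin.pos_iff_nonempty.mp hM))
        (fun i => ⟪v i, d⟫)) + (1 / 2) * ‖d‖ ^ 2)
    (hbW : ‖dW‖ ≤ C) (hbV : ‖dV‖ ≤ C) :
    ‖dW - dV‖ ^ 2 ≤ 2 * C * K ∧ ‖dW - dV‖ ≤ Real.sqrt (2 * C) * Real.sqrt K := by
  have hne : (Finset.univ : Finset (Fin M)).Nonempty :=
    Finset.univ_nonempty_iff.mpr (Fin.pos_iff_nonempty.mp hM)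
  -- strong convexity at the two minimizers
  have hW := strong_min_aux hne w dW dV hdW
  have hV := strong_min_aux hne v dV dW hdV
  -- bound the sup differences
  have hsupWV : ∀ d : EuclideanSpace ℝ (Fin N),
      Finset.univ.sup' hne (fun i => ⟪w i, d⟫)
        ≤ Finset.univ.sup' hne (fun i => ⟪v i, d⟫) + K * ‖d‖ := by
    intro d
    apply Finset.sup'_le
    intro i _
    have h1 : ⟪w i, d⟫ = ⟪v i, d⟫ + ⟪w i - v i, d⟫ := by
      rw [inner_sub_left]; ring
    have h2 : ⟪v i, d⟫ ≤ Finset.univ.sup' hne (fun i => ⟪v i, d⟫) :=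
      Finset.le_sup' (fun i => ⟪v i, d⟫) (Finset.mem_univ i)
    have h3 : ⟪w i - v i, d⟫ ≤ K * ‖d‖ := (abs_le.mp (hdom i d)).2
    linarith [h1 ▸ add_le_add h2 h3]
  have hsupVW : ∀ d : EuclideanSpace ℝ (Fin N),
      Finset.univ.sup' hne (fun i => ⟪v i, d⟫)
        ≤ Finset.univ.sup' hne (fun i => ⟪w i, d⟫) + K * ‖d‖ := by
    intro d
    apply Finset.sup'_le
    intro i _
    have h1 : ⟪v i, d⟫ = ⟪w i, d⟫ + (-⟪w i - v i, d⟫) := by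
      rw [inner_sub_left]; ring
    have h2 : ⟪w i, d⟫ ≤ Finset.univ.sup' hne (fun i => ⟪w i, d⟫) :=
      Finset.le_sup' (fun i => ⟪w i, d⟫) (Finset.mem_univ i)
    have h3 : -⟪w i - v i, d⟫ ≤ K * ‖d‖ := by linarith [(abs_le.mp (hdom i d)).1]
    linarith [h1 ▸ add_le_add h2 h3]
  have hnorm : ‖dV - dW‖ = ‖dW - dV‖ := norm_sub_rev _ _
  rw [hnorm] at hW
  have hb1 := hsupWV dV
  have hb2 := hsupVW dW
  have hsq : ‖dW - dV‖ ^ 2 ≤ 2 * C * K := by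
    have hKW : K * ‖dW‖ ≤ K * C := mul_le_mul_of_nonneg_left hbW hK
    have hKV : K * ‖dV‖ ≤ K * C := mul_le_mul_of_nonneg_left hbV hK
    nlinarith [hW, hV, hb1, hb2]
  refine ⟨hsq, ?_⟩
  have h2CK : ‖dW - dV‖ ^ 2 ≤ 2 * C * K := hsq
  have := Real.sqrt_le_sqrt h2CK
  rw [Real.sqrt_sq (norm_nonneg _)] at this
  rwa [Real.sqrt_mul (by positivity : (0:ℝ) ≤ 2 * C)] at this
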